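/- arXiv:2111.11361 — 3 statements merged into one kernel-verified Lean document; each statement's English description precedes it below -/
import Mathlib

section
/- Let k > 0, Λ < 0, and ε = ±1 with εΛ < 0. Then the system of equations A = B = 1, where A = k·sqrt(−2εΛ/3)·ρ₀·sqrt((ρ₀+2γ)/(ρ₀+γ)) and B = sqrt(−εΛ/3)·ρ₀/sqrt(ρ₀+2γ), in the unknowns (ρ₀, γ) subject to ρ₀ ≠ 0, ρ₀+γ > 0, ρ₀+2γ > 0, implies 2γ = −ρ₀(1 + (εΛ/3)ρ₀) and ρ₀³ + (3/(4εΛk²))ρ₀ − 9/(4k²Λ²) = 0. -/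
/-!
Both equations are radical equations with right-hand side `1`, so none of their factors vanishes;
in particular every radicand is positive and squaring loses nothing. Writing `L = εΛ`, the squared
`B`-equation reads `-(L/3) ρ₀² = ρ₀ + 2γ`, which is the first claim, and substituting it into the
squared `A`-equation leaves `4 L² k² ρ₀³ + 3 L ρ₀ - 9 = 0` after cancelling `ρ₀`. Since `ε² = 1`,
`L² = Λ²`, which turns this into the stated cubic.
-/

open Real

lemma Real.sq_sqrt_of_sqrt_ne_zero {a : ℝ} (h : √a ≠ 0) : √a ^ 2 = a :=
  sq_sqrt (sqrt_ne_zero'.mp h).le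

lemma mul_sq_eq_of_sqrt_mul_div_sqrt_eq_one {a b x : ℝ} (h : √a * x / √b = 1) :
    a * x ^ 2 = b := by
  obtain ⟨hax, hb⟩ := div_ne_zero_iff.mp (ne_of_eq_of_ne h one_ne_zero)
  rw [div_eq_one_iff_eq hb] at h
  rw [← sq_sqrt_of_sqrt_ne_zero (left_ne_zero_of_mul hax), ← sq_sqrt_of_sqrt_ne_zero hb, ← h]
  ring

lemma sq_mul_eq_one_of_mul_sqrt_mul_sqrt_eq_one {c a x q : ℝ} (h : c * √a * x * √q = 1) :
    c ^ 2 * a * x ^ 2 * q = 1 := by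
  have h0 := ne_of_eq_of_ne h one_ne_zero
  simp only [mul_ne_zero_iff] at h0
  obtain ⟨⟨⟨-, ha⟩, -⟩, hq⟩ := h0
  rw [← sq_sqrt_of_sqrt_ne_zero ha, ← sq_sqrt_of_sqrt_ne_zero hq]
  linear_combination (c * √a * x * √q + 1) * h

lemma cubic_of_squared_constraints {L k ρ γ : ℝ} (hk : k ≠ 0) (hρ : ρ ≠ 0)
    (hB : -L / 3 * ρ ^ 2 = ρ + 2 * γ)
    (hA : k ^ 2 * (-(2 * L) / 3) * ρ ^ 2 * (ρ + 2 * γ) = ρ + γ) :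
    ρ ^ 3 + 3 / (4 * L * k ^ 2) * ρ - 9 / (4 * k ^ 2 * L ^ 2) = 0 := by
  have hP : 4 * L ^ 2 * k ^ 2 * ρ ^ 3 + 3 * L * ρ - 9 = 0 :=
    mul_left_cancel₀ hρ (by linear_combination 18 * hA + (-12 * L * k ^ 2 * ρ ^ 2 - 9) * hB)
  have hL : L ≠ 0 := by
    rintro rfl
    norm_num at hP
  field_simp
  linear_combination hP

theorem stmt5_general (k Λ ε ρ₀ γ : ℝ) (hε : ε = 1 ∨ ε = -1)
    (hA : k * Real.sqrt (-(2 * (ε*Λ)) / 3) * ρ₀ * Real.sqrt ((ρ₀ + 2*γ) / (ρ₀ + γ)) = 1)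
    (hB : Real.sqrt (-(ε*Λ) / 3) * ρ₀ / Real.sqrt (ρ₀ + 2*γ) = 1) :
    2*γ = -ρ₀ * (1 + (ε*Λ/3) * ρ₀) ∧
    ρ₀^3 + (3 / (4 * (ε*Λ) * k^2)) * ρ₀ - 9 / (4 * k^2 * Λ^2) = 0 := by
  have hA0 := ne_of_eq_of_ne hA one_ne_zero
  simp only [mul_ne_zero_iff] at hA0
  obtain ⟨⟨⟨hk, -⟩, hρ₀⟩, hq⟩ := hA0
  have hγ : ρ₀ + γ ≠ 0 := (div_ne_zero_iff.mp (sqrt_ne_zero'.mp hq).ne').2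
  have hB2 := mul_sq_eq_of_sqrt_mul_div_sqrt_eq_one hB
  have hA2 := sq_mul_eq_one_of_mul_sqrt_mul_sqrt_eq_one hA
  rw [mul_div_assoc', div_eq_one_iff_eq hγ] at hA2
  have hΛ : Λ ^ 2 = (ε * Λ) ^ 2 := by rcases hε with rfl | rfl <;> ring
  refine ⟨by linear_combination -hB2, ?_⟩
  rw [hΛ]
  exact cubic_of_squared_constraints hk hρ₀ hB2 hA2

theorem stmt5 (k Λ ε ρ₀ γ : ℝ) (hk : 0 < k) (hΛ : Λ < 0) (hε : ε = 1 ∨ ε = -1)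
    (hεΛ : ε * Λ < 0) (hρ₀ : ρ₀ ≠ 0) (h₁ : 0 < ρ₀ + γ) (h₂ : 0 < ρ₀ + 2*γ)
    (hA : k * Real.sqrt (-(2 * (ε*Λ)) / 3) * ρ₀ * Real.sqrt ((ρ₀ + 2*γ) / (ρ₀ + γ)) = 1)
    (hB : Real.sqrt (-(ε*Λ) / 3) * ρ₀ / Real.sqrt (ρ₀ + 2*γ) = 1) :
    2*γ = -ρ₀ * (1 + (ε*Λ/3) * ρ₀) ∧
    ρ₀^3 + (3 / (4 * (ε*Λ) * k^2)) * ρ₀ - 9 / (4 * k^2 * Λ^2) = 0 :=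
  stmt5_general k Λ ε ρ₀ γ hε hA hB
end

section
/- Let (M,g) be a pseudo-Riemannian manifold with two anti-commuting skew-symmetric endomorphism fields J₂, J₃ satisfying J₂² = J₃² = ε·Id for ε = ±1, such that the two-forms ω_i = g(J_i·, ·) for i = 2,3 are closed. Then J₁ := J₂J₃ is an almost complex structure (J₁² = −Id), is skew-symmetric with respect to g, and is integrable. -/
/-- Lie bracket of vector fields on a normed space. -/
noncomputable def vecBracket {E : Type*} [NormedAddCommGroup E] [NormedSpace ℝ E]
    (X Y : E → E) : E → E :=
  fun p => fderiv ℝ Y p (X p) - fderiv ℝ X p (Y p)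

/-- Exterior differential of a two-form (given pointwise on pairs of vectors),
evaluated on constant vector fields. -/
noncomputable def dTwoForm {E : Type*} [NormedAddCommGroup E] [NormedSpace ℝ E]
    (ω : E → E → E → ℝ) (p u v w : E) : ℝ :=
  fderiv ℝ (fun q => ω q v w) p u - fderiv ℝ (fun q => ω q u w) p v
    + fderiv ℝ (fun q => ω q u v) p w

/-- Nijenhuis tensor of an endomorphism field, computed on constant vector fields:
`N(u,v) = [Ju,Jv] − J[Ju,v] − J[u,Jv] + J²[u,v]`. -/
noncomputable def nijenhuisTensor {E : Type*} [NormedAddCommGroup E] [NormedSpace ℝ E]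
    (J : E → E →L[ℝ] E) (p u v : E) : E :=
  vecBracket (fun q => J q u) (fun q => J q v) p
    - J p (vecBracket (fun q => J q u) (fun _ => v) p)
    - J p (vecBracket (fun _ => u) (fun q => J q v) p)
    + J p (J p (vecBracket (fun _ => u) (fun _ => v) p))

section aux
variable {E : Type*} [NormedAddCommGroup E] [NormedSpace ℝ E]

lemma derivSlot1 (A : E → E →L[ℝ] E →L[ℝ] ℝ) (m : E → E)
    (hA : ContDiff ℝ (⊤ : ℕ∞) A) (hm : ContDiff ℝ (⊤ : ℕ∞) m) (p a y : E) :
    fderiv ℝ (fun q => A q (m q) y) p a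
      = fderiv ℝ (fun q => A q (m p) y) p a + A p (fderiv ℝ m p a) y := by
  have hAd : DifferentiableAt ℝ A p := (hA.differentiable (by simp)) p
  have hmd : DifferentiableAt ℝ m p := (hm.differentiable (by simp)) p
  have hf : DifferentiableAt ℝ (fun q => A q (m q)) p := hAd.clm_apply hmd
  have hfc : DifferentiableAt ℝ (fun q => A q (m p)) p :=
    hAd.clm_apply (differentiableAt_const _)
  rw [fderiv_clm_apply hf (differentiableAt_const y),
    fderiv_clm_apply hfc (differentiableAt_const y),
    fderiv_clm_apply hAd hmd, fderiv_clm_apply hAd (differentiableAt_const (m p))]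
  simp
  ring
end aux


theorem stmt11 {E : Type*} [NormedAddCommGroup E] [NormedSpace ℝ E]
    (g : E → E →L[ℝ] E →L[ℝ] ℝ) (J₂ J₃ : E → E →L[ℝ] E) (ε : ℝ)
    (hε : ε = 1 ∨ ε = -1)
    (hg_smooth : ContDiff ℝ (⊤ : ℕ∞) g) (hJ₂smooth : ContDiff ℝ (⊤ : ℕ∞) J₂)
    (hJ₃smooth : ContDiff ℝ (⊤ : ℕ∞) J₃)
    (hg_symm : ∀ p u v, g p u v = g p v u)
    (hg_nondeg : ∀ p u, (∀ v, g p u v = 0) → u = 0)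
    (hskew₂ : ∀ p u v, g p (J₂ p u) v = -(g p u (J₂ p v)))
    (hskew₃ : ∀ p u v, g p (J₃ p u) v = -(g p u (J₃ p v)))
    (hanti : ∀ p, (J₂ p).comp (J₃ p) + (J₃ p).comp (J₂ p) = 0)
    (hsq₂ : ∀ p, (J₂ p).comp (J₂ p) = ε • ContinuousLinearMap.id ℝ E)
    (hsq₃ : ∀ p, (J₃ p).comp (J₃ p) = ε • ContinuousLinearMap.id ℝ E)
    (hclosed₂ : ∀ p u v w, dTwoForm (fun q x y => g q (J₂ q x) y) p u v w = 0)
    (hclosed₃ : ∀ p u v w, dTwoForm (fun q x y => g q (J₃ q x) y) p u v w = 0) :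
    (∀ p, ((J₂ p).comp (J₃ p)).comp ((J₂ p).comp (J₃ p))
        = -ContinuousLinearMap.id ℝ E) ∧
    (∀ p u v, g p ((J₂ p) ((J₃ p) u)) v = -(g p u ((J₂ p) ((J₃ p) v)))) ∧
    (∀ p u v, nijenhuisTensor (fun q => (J₂ q).comp (J₃ q)) p u v = 0) := by
  have hε2 : ε * ε = 1 := by rcases hε with h | h <;> rw [h] <;> norm_num
  have hεne : ε ≠ 0 := by rcases hε with h | h <;> rw [h] <;> norm_num
  have hsq₂' : ∀ p z, (J₂ p) ((J₂ p) z) = ε • z := by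
    intro p z
    have h := ContinuousLinearMap.ext_iff.mp (hsq₂ p) z
    simpa using h
  have hsq₃' : ∀ p z, (J₃ p) ((J₃ p) z) = ε • z := by
    intro p z
    have h := ContinuousLinearMap.ext_iff.mp (hsq₃ p) z
    simpa using h
  have hac : ∀ p z, (J₃ p) ((J₂ p) z) = -((J₂ p) ((J₃ p) z)) := by
    intro p z
    have h := ContinuousLinearMap.ext_iff.mp (hanti p) z
    simp only [ContinuousLinearMap.add_apply, ContinuousLinearMap.comp_apply,
      ContinuousLinearMap.zero_apply] at h
    exact eq_neg_of_add_eq_zero_right h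
  refine ⟨?_, ?_, ?_⟩
  · -- J₁² = -1
    intro p
    ext x
    simp only [ContinuousLinearMap.comp_apply, ContinuousLinearMap.neg_apply,
      ContinuousLinearMap.coe_id', id_eq]
    rw [hac p ((J₃ p) x), map_neg, hsq₃' p x, map_smul, map_smul, hsq₂' p x,
      smul_smul, hε2, one_smul]
  · -- skewness
    intro p u v
    rw [hskew₂ p ((J₃ p) u) v, hskew₃ p u ((J₂ p) v), hac p v]
    simp
  · -- integrability
    intro p u v
    -- differentiability helpers
    have hdJ : ∀ x : E, ContDiff ℝ (⊤ : ℕ∞) (fun q => (J₂ q) ((J₃ q) x)) :=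
      fun x => hJ₂smooth.clm_apply (hJ₃smooth.clm_apply contDiff_const)
    have hT₂d : ∀ x y : E, DifferentiableAt ℝ (fun q => g q ((J₂ q) x) y) p :=
      fun x y => (((hg_smooth.clm_apply (hJ₂smooth.clm_apply contDiff_const)).clm_apply
        contDiff_const).differentiable (by simp)) p
    have hT₃d : ∀ x y : E, DifferentiableAt ℝ (fun q => g q ((J₃ q) x) y) p :=
      fun x y => (((hg_smooth.clm_apply (hJ₃smooth.clm_apply contDiff_const)).clm_apply
        contDiff_const).differentiable (by simp)) p
    have hH₂ : ∀ a b c : E,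
        fderiv ℝ (fun q => g q ((J₂ q) b) c) p a - fderiv ℝ (fun q => g q ((J₂ q) a) c) p b
          + fderiv ℝ (fun q => g q ((J₂ q) a) b) p c = 0 := by
      intro a b c
      have h := hclosed₂ p a b c
      simpa [dTwoForm] using h
    have hH₃ : ∀ a b c : E,
        fderiv ℝ (fun q => g q ((J₃ q) b) c) p a - fderiv ℝ (fun q => g q ((J₃ q) a) c) p b
          + fderiv ℝ (fun q => g q ((J₃ q) a) b) p c = 0 := by
      intro a b c
      have h := hclosed₃ p a b c
      simpa [dTwoForm] using h
    have hR1 : ∀ a x y : E,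
        fderiv ℝ (fun q => g q ((J₂ q) ((J₂ p) ((J₃ p) x))) y) p a
          + g p ((J₂ p) (fderiv ℝ (fun q => (J₂ q) ((J₃ q) x)) p a)) y
        = ε * fderiv ℝ (fun q => g q ((J₃ q) x) y) p a := by
      intro a x y
      have h1 := derivSlot1 (fun q => (g q).comp (J₂ q)) (fun q => (J₂ q) ((J₃ q) x))
        (hg_smooth.clm_comp hJ₂smooth) (hdJ x) p a y
      simp only [ContinuousLinearMap.comp_apply] at h1
      have heq : (fun q => g q ((J₂ q) ((J₂ q) ((J₃ q) x))) y)
          = fun q => ε * g q ((J₃ q) x) y := by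
        funext q
        rw [hsq₂' q ((J₃ q) x), map_smul]
        simp
      rw [heq, fderiv_const_mul (hT₃d x y) ε] at h1
      simp only [ContinuousLinearMap.smul_apply, smul_eq_mul] at h1
      linarith [h1]
    have hR2 : ∀ a x y : E,
        fderiv ℝ (fun q => g q ((J₃ q) ((J₂ p) ((J₃ p) x))) y) p a
          + g p ((J₃ p) (fderiv ℝ (fun q => (J₂ q) ((J₃ q) x)) p a)) y
        = -ε * fderiv ℝ (fun q => g q ((J₂ q) x) y) p a := by
      intro a x y
      have h1 := derivSlot1 (fun q => (g q).comp (J₃ q)) (fun q => (J₂ q) ((J₃ q) x))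
        (hg_smooth.clm_comp hJ₃smooth) (hdJ x) p a y
      simp only [ContinuousLinearMap.comp_apply] at h1
      have heq : (fun q => g q ((J₃ q) ((J₂ q) ((J₃ q) x))) y)
          = fun q => -ε * g q ((J₂ q) x) y := by
        funext q
        rw [hac q ((J₃ q) x), hsq₃' q x, map_smul, map_neg, map_smul]
        simp only [ContinuousLinearMap.neg_apply, ContinuousLinearMap.smul_apply, smul_eq_mul]
        ring
      rw [heq, fderiv_const_mul (hT₂d x y) (-ε)] at h1
      simp only [ContinuousLinearMap.smul_apply, smul_eq_mul] at h1
      linarith [h1]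
    have hconv : ∀ z y : E,
        g p ((J₂ p) z) ((J₂ p) ((J₃ p) y)) = ε * g p ((J₃ p) z) y := by
      intro z y
      rw [hskew₂ p z ((J₂ p) ((J₃ p) y)), hsq₂' p ((J₃ p) y), map_smul]
      have h2 := hskew₃ p z y
      simp only [smul_eq_mul]
      linear_combination (-ε) * h2
    have hpj : ∀ z y : E,
        g p ((J₂ p) ((J₂ p) ((J₃ p) z))) y = ε * g p ((J₃ p) z) y := by
      intro z y
      rw [hsq₂' p ((J₃ p) z), map_smul]
      simp
    have main : ∀ N : E, (∀ w : E, g p ((J₂ p) N) w = 0) → N = 0 := by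
      intro N h
      have h2 : (J₂ p) N = 0 := hg_nondeg p _ h
      have h3 := hsq₂' p N
      rw [h2, map_zero] at h3
      rcases smul_eq_zero.mp h3.symm with h4 | h4
      · exact absurd h4 hεne
      · exact h4
    refine main _ ?_
    intro w
    simp only [nijenhuisTensor, vecBracket, ContinuousLinearMap.comp_apply,
      fderiv_fun_const, Pi.zero_apply, ContinuousLinearMap.zero_apply, map_zero,
      zero_sub, sub_zero, map_sub, map_neg, map_add, add_zero,
      ContinuousLinearMap.sub_apply, ContinuousLinearMap.add_apply,
      ContinuousLinearMap.neg_apply, neg_neg]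
    simp only [hpj]
    rcases hε with h | h <;> subst h <;>
      linarith [hR1 ((J₂ p) ((J₃ p) u)) v w, hR1 ((J₂ p) ((J₃ p) v)) u w,
        hR1 w u ((J₂ p) ((J₃ p) v)), hR2 v u w, hR2 u v w, hR2 w u v,
        hH₂ ((J₂ p) ((J₃ p) u)) ((J₂ p) ((J₃ p) v)) w, hH₂ u v w,
        hH₃ ((J₂ p) ((J₃ p) u)) v w, hH₃ u ((J₂ p) ((J₃ p) v)) w,
        hconv (fderiv ℝ (fun q => (J₂ q) ((J₃ q) u)) p w) v]
end

section
/- If the pair of smooth real functions (a, b) on an interval I solves the system a′(t) = −(k²b⁶ + a²(−Λb² + (b′)²))/(2abb′) and Λ·a²b²(3kb³ + ab′) = 3(kb³ + ab′)³ with a(t₀)=b(t₀)=1, then the functions ã(t) = a(2t₀−t), b̃(t) = b(2t₀−t) solve a′(t) = −(k²b⁶ + a²(Λ̃b² + (b′)²))/(2abb′) and Λ̃·a²b²(−3kb³ + ab′) = 3(kb³ − ab′)³ with Λ̃ = −Λ and ã(t₀)=b̃(t₀)=1, on the reflected interval {t : 2t₀−t ∈ I}. -/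
/-! Reversing time negates `a′` and `b′` (`deriv_comp_const_sub`). The first equation involves the
derivatives only through `a′b′` and `b′²`, so it is unchanged; in the second, the sign change of
`b′` negates the bracket `3kb³ + ab′` on the left, and `Λ̃ = −Λ` absorbs it. -/

theorem stmt15_general (k Λ t₀ : ℝ) (I : Set ℝ)
    (a b : ℝ → ℝ)
    (heq1 : ∀ t ∈ I, 2 * a t * b t * deriv b t * deriv a t
      = -(k^2 * (b t)^6 + (a t)^2 * (-Λ * (b t)^2 + (deriv b t)^2)))
    (heq2 : ∀ t ∈ I, Λ * (a t)^2 * (b t)^2 * (3*k * (b t)^3 + a t * deriv b t)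
      = 3 * (k * (b t)^3 + a t * deriv b t)^3)
    (ha0 : a t₀ = 1) (hb0 : b t₀ = 1) :
    (fun t => a (2*t₀ - t)) t₀ = 1 ∧ (fun t => b (2*t₀ - t)) t₀ = 1 ∧
    ∀ t, 2*t₀ - t ∈ I →
      (2 * a (2*t₀ - t) * b (2*t₀ - t) * deriv (fun s => b (2*t₀ - s)) t
          * deriv (fun s => a (2*t₀ - s)) t
        = -(k^2 * (b (2*t₀ - t))^6 + (a (2*t₀ - t))^2
            * ((-Λ) * (b (2*t₀ - t))^2 + (deriv (fun s => b (2*t₀ - s)) t)^2))) ∧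
      ((-Λ) * (a (2*t₀ - t))^2 * (b (2*t₀ - t))^2
          * (-(3*k) * (b (2*t₀ - t))^3 + a (2*t₀ - t) * deriv (fun s => b (2*t₀ - s)) t)
        = 3 * (k * (b (2*t₀ - t))^3
            - a (2*t₀ - t) * deriv (fun s => b (2*t₀ - s)) t)^3) := by
  have hfix : 2 * t₀ - t₀ = t₀ := by ring
  refine ⟨by simp only [hfix, ha0], by simp only [hfix, hb0], fun t ht => ?_⟩
  simp only [deriv_comp_const_sub]
  exact ⟨by linear_combination heq1 _ ht, by linear_combination heq2 _ ht⟩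

theorem stmt15 (k Λ t₀ : ℝ) (hk : 0 < k) (I : Set ℝ) (ht₀ : t₀ ∈ I)
    (a b : ℝ → ℝ)
    (hdiff : ∀ t ∈ I, DifferentiableAt ℝ a t ∧ DifferentiableAt ℝ b t)
    (heq1 : ∀ t ∈ I, 2 * a t * b t * deriv b t * deriv a t
      = -(k^2 * (b t)^6 + (a t)^2 * (-Λ * (b t)^2 + (deriv b t)^2)))
    (heq2 : ∀ t ∈ I, Λ * (a t)^2 * (b t)^2 * (3*k * (b t)^3 + a t * deriv b t)
      = 3 * (k * (b t)^3 + a t * deriv b t)^3)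
    (ha0 : a t₀ = 1) (hb0 : b t₀ = 1) :
    (fun t => a (2*t₀ - t)) t₀ = 1 ∧ (fun t => b (2*t₀ - t)) t₀ = 1 ∧
    ∀ t, 2*t₀ - t ∈ I →
      (2 * a (2*t₀ - t) * b (2*t₀ - t) * deriv (fun s => b (2*t₀ - s)) t
          * deriv (fun s => a (2*t₀ - s)) t
        = -(k^2 * (b (2*t₀ - t))^6 + (a (2*t₀ - t))^2
            * ((-Λ) * (b (2*t₀ - t))^2 + (deriv (fun s => b (2*t₀ - s)) t)^2))) ∧
      ((-Λ) * (a (2*t₀ - t))^2 * (b (2*t₀ - t))^2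
          * (-(3*k) * (b (2*t₀ - t))^3 + a (2*t₀ - t) * deriv (fun s => b (2*t₀ - s)) t)
        = 3 * (k * (b (2*t₀ - t))^3
            - a (2*t₀ - t) * deriv (fun s => b (2*t₀ - s)) t)^3) :=
  stmt15_general k Λ t₀ I a b heq1 heq2 ha0 hb0
end
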